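/- arXiv:1411.5583 — 2 statements merged into one kernel-verified Lean document; each statement's English description precedes it below -/
import Mathlib

section
/- There is no G(K₄)-adapted spanning tree of the complete graph K₄: no spanning tree t of K₄ has the property that E(t) ∩ E(g) is a spanning tree of g for every saturated subgraph g of K₄. In fact, no spanning tree of K₄ simultaneously induces spanning trees of all four triangle (K₃) subgraphs. -/
/-! Each edge of `K₄` lies in exactly two of its four triangles and a spanning tree of `K₄` has
three edges, so a spanning tree has six edges inside triangles, counted with multiplicity.
Inducing a spanning tree, i.e. two edges, on each of the four triangles would take eight.
Triangles are saturated, so an adapted tree would be such a tree. -/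

attribute [local instance] Classical.propDecidable

namespace Stmt7

/-- The complete graph `K₄`. -/
noncomputable def EK4 : Finset (Sym2 (Fin 4)) := (⊤ : SimpleGraph (Fin 4)).edgeFinset

/-- `s` is a spanning forest of the subgraph with edge set `g`: `s ⊆ g`, `s` is acyclic,
and `s` connects everything that `g` connects (same connected components). -/
def SpForest (s g : Finset (Sym2 (Fin 4))) : Prop :=
  s ⊆ g ∧ (SimpleGraph.fromEdgeSet ((s : Set (Sym2 (Fin 4))))).IsAcyclic ∧
    ∀ v w : Fin 4, (SimpleGraph.fromEdgeSet ((g : Set (Sym2 (Fin 4))))).Reachable v w →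
      (SimpleGraph.fromEdgeSet ((s : Set (Sym2 (Fin 4))))).Reachable v w

/-- A subgraph of `K₄` is saturated if it contains every edge of `K₄` whose endpoints
are already connected in it. -/
def Saturated (g : Finset (Sym2 (Fin 4))) : Prop :=
  g ⊆ EK4 ∧ ∀ v w : Fin 4, v ≠ w →
    (SimpleGraph.fromEdgeSet ((g : Set (Sym2 (Fin 4))))).Reachable v w → s(v, w) ∈ g

/-- The edges of `K₄` lying inside a vertex set `S` (for `|S| = 3`, a triangle). -/
noncomputable def triEdges (S : Finset (Fin 4)) : Finset (Sym2 (Fin 4)) :=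
  EK4.filter (fun e => ∀ v ∈ e, v ∈ S)

open Finset SimpleGraph

section General

variable {V : Type*}

lemma exists_mem_of_reachable_fromEdgeSet {s : Set (Sym2 V)} {v w : V}
    (h : (fromEdgeSet s).Reachable v w) (hvw : v ≠ w) : ∃ e ∈ s, v ∈ e := by
  obtain ⟨u, hu⟩ := (mem_support _).mp (mem_support_of_reachable hvw h)
  exact ⟨s(v, u), (fromEdgeSet_adj s).mp hu |>.1, Sym2.mem_mk_left v u⟩

lemma two_le_card_of_mem {s : Finset (Sym2 V)} {a b c : V} (hab : a ≠ b) (hac : a ≠ c)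
    (hbc : b ≠ c) (ha : ∃ e ∈ s, a ∈ e) (hb : ∃ e ∈ s, b ∈ e) (hc : ∃ e ∈ s, c ∈ e) :
    2 ≤ #s := by
  by_contra! hs
  have hsame : ∀ e ∈ s, ∀ e' ∈ s, e = e' := card_le_one.mp (Nat.le_of_lt_succ hs)
  obtain ⟨ea, hea, hae⟩ := ha
  obtain ⟨eb, heb, hbe⟩ := hb
  obtain ⟨ec, hec, hce⟩ := hc
  rw [hsame eb heb ea hea] at hbe
  rw [hsame ec hec ea hea, (Sym2.mem_and_mem_iff hab).mp ⟨hae, hbe⟩] at hce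
  rcases Sym2.mem_iff.mp hce with rfl | rfl
  exacts [hac rfl, hbc rfl]

lemma edgeFinset_fromEdgeSet_coe {t : Finset (Sym2 V)}
    [Fintype (fromEdgeSet (t : Set (Sym2 V))).edgeSet]
    (ht : ∀ e ∈ t, ¬ e.IsDiag) : (fromEdgeSet (t : Set (Sym2 V))).edgeFinset = t := by
  ext e
  simp only [mem_edgeFinset, edgeSet_fromEdgeSet, Set.mem_sdiff, mem_coe, Sym2.mem_diagSet]
  exact ⟨And.left, fun he => ⟨he, ht e he⟩⟩

lemma card_add_one_of_isTree_fromEdgeSet [Fintype V] {t : Finset (Sym2 V)}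
    (htree : (fromEdgeSet (t : Set (Sym2 V))).IsTree) (ht : ∀ e ∈ t, ¬ e.IsDiag) :
    #t + 1 = Fintype.card V := by
  simpa only [edgeFinset_fromEdgeSet_coe ht] using htree.card_edgeFinset

lemma sum_card_inter_eq_card_mul {ι α : Type*} [DecidableEq α] {I : Finset ι} {s : Finset α}
    {f : ι → Finset α} {n : ℕ} (h : ∀ a ∈ s, #{i ∈ I | a ∈ f i} = n) :
    ∑ i ∈ I, #(s ∩ f i) = #s * n :=
  calc ∑ i ∈ I, #(s ∩ f i) = ∑ a ∈ s, #{i ∈ I | a ∈ f i} := by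
        simp_rw [← filter_mem_eq_inter, card_eq_sum_ones, sum_filter]
        exact sum_comm
    _ = #s * n := by rw [sum_congr rfl h, sum_const, smul_eq_mul]

end General

lemma mem_EK4 {e : Sym2 (Fin 4)} : e ∈ EK4 ↔ ¬ e.IsDiag := by
  simp [EK4]

lemma mem_triEdges {S : Finset (Fin 4)} {e : Sym2 (Fin 4)} :
    e ∈ triEdges S ↔ ¬ e.IsDiag ∧ ∀ v ∈ e, v ∈ S := by
  simp [triEdges, mem_EK4]

lemma card_triEdges {S : Finset (Fin 4)} (hS : #S = 3) : #(triEdges S) = 3 := by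
  have count : ∀ S : Finset (Fin 4), #S = 3 →
      #{e : Sym2 (Fin 4) | ¬ e.IsDiag ∧ ∀ v ∈ e, v ∈ S} = 3 := by decide
  convert count S hS using 2
  ext e
  simp [mem_triEdges]

lemma card_filter_mem_triEdges {e : Sym2 (Fin 4)} (he : ¬ e.IsDiag) :
    #{S ∈ powersetCard 3 univ | e ∈ triEdges S} = 2 := by
  have count : ∀ e : Sym2 (Fin 4), ¬ e.IsDiag →
      #{S ∈ powersetCard 3 (univ : Finset (Fin 4)) | ∀ v ∈ e, v ∈ S} = 2 := by decide
  convert count e he using 2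
  ext S
  simp [mem_triEdges, he]

lemma fromEdgeSet_triEdges_adj {S : Finset (Fin 4)} {x y : Fin 4} :
    (fromEdgeSet (triEdges S : Set (Sym2 (Fin 4)))).Adj x y ↔ x ∈ S ∧ y ∈ S ∧ x ≠ y := by
  simp only [fromEdgeSet_adj, mem_coe, mem_triEdges, Sym2.mk_isDiag_iff, Sym2.forall_mem_pair]
  tauto

lemma isClique_fromEdgeSet_triEdges (S : Finset (Fin 4)) :
    (fromEdgeSet (triEdges S : Set (Sym2 (Fin 4)))).IsClique (S : Set (Fin 4)) :=
  fun _ hx _ hy hxy => fromEdgeSet_triEdges_adj.mpr ⟨hx, hy, hxy⟩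

lemma saturated_triEdges (S : Finset (Fin 4)) : Saturated (triEdges S) := by
  refine ⟨filter_subset _ _, fun v w hvw hreach => ?_⟩
  obtain ⟨e, he, hve⟩ := exists_mem_of_reachable_fromEdgeSet hreach hvw
  obtain ⟨e', he', hwe'⟩ := exists_mem_of_reachable_fromEdgeSet hreach.symm hvw.symm
  have hadj := fromEdgeSet_triEdges_adj.mpr
    ⟨(mem_triEdges.mp he).2 v hve, (mem_triEdges.mp he').2 w hwe', hvw⟩
  exact ((fromEdgeSet_adj _).mp hadj).1

/-- A spanning forest of a triangle must touch all three vertices, and cannot be the whole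
triangle. -/
lemma SpForest.card_eq_two_of_triEdges {s : Finset (Sym2 (Fin 4))} {S : Finset (Fin 4)}
    (hS : #S = 3) (hs : SpForest s (triEdges S)) : #s = 2 := by
  obtain ⟨hsub, hacyc, hreach⟩ := hs
  obtain ⟨a, b, c, hab, hac, hbc, rfl⟩ := card_eq_three.mp hS
  have touches {v w : Fin 4} (hv : v ∈ ({a, b, c} : Finset (Fin 4)))
      (hw : w ∈ ({a, b, c} : Finset (Fin 4))) (hvw : v ≠ w) : ∃ e ∈ s, v ∈ e :=
    exists_mem_of_reachable_fromEdgeSet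
      (hreach v w (fromEdgeSet_triEdges_adj.mpr ⟨hv, hw, hvw⟩).reachable) hvw
  have hlower : 2 ≤ #s := two_le_card_of_mem hab hac hbc
    (touches (by simp) (by simp) hab) (touches (by simp) (by simp) hab.symm)
    (touches (by simp) (by simp) hac.symm)
  have hne : s ≠ triEdges {a, b, c} := by
    rintro rfl
    exact hacyc.cliqueFree le_rfl {a, b, c}
      ((isNClique_iff _).mpr ⟨by simpa using isClique_fromEdgeSet_triEdges {a, b, c}, hS⟩)
  have hupper : #s < 3 := card_triEdges hS ▸ card_lt_card (ssubset_of_subset_of_ne hsub hne)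
  omega

lemma sum_card_inter_triEdges {t : Finset (Sym2 (Fin 4))} (ht : t ⊆ EK4) :
    ∑ S ∈ powersetCard 3 univ, #(t ∩ triEdges S) = #t * 2 :=
  sum_card_inter_eq_card_mul fun _ he => card_filter_mem_triEdges (mem_EK4.mp (ht he))

lemma not_exists_isTree_card_inter_triEdges_eq_two :
    ¬ ∃ t : Finset (Sym2 (Fin 4)),
      (fromEdgeSet (t : Set (Sym2 (Fin 4)))).IsTree ∧ SpForest t EK4 ∧
      ∀ S : Finset (Fin 4), #S = 3 → #(t ∩ triEdges S) = 2 := by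
  rintro ⟨t, htree, ⟨htK, -, -⟩, htri⟩
  have hcard : #t + 1 = 4 := by
    simpa using card_add_one_of_isTree_fromEdgeSet htree fun e he => mem_EK4.mp (htK he)
  have hsum : ∑ S ∈ powersetCard 3 univ, #(t ∩ triEdges S) = 4 * 2 := by
    rw [sum_congr rfl fun S hS => htri S (mem_powersetCard.mp hS).2]
    simp
  rw [sum_card_inter_triEdges htK] at hsum
  omega

/-- There is no `G(K₄)`-adapted spanning tree of `K₄`: no spanning
tree `t` of `K₄` induces a spanning tree (forest) `E(t) ∩ E(g)` of every saturated
subgraph `g` of `K₄`. In fact, no spanning tree of `K₄` simultaneously induces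
spanning trees of all four triangle (`K₃`) subgraphs, i.e. contains exactly two
edges of each of the four triangles. -/
theorem no_adapted_spanning_tree_K4 :
    (¬ ∃ t : Finset (Sym2 (Fin 4)),
        (SimpleGraph.fromEdgeSet ((t : Set (Sym2 (Fin 4))))).IsTree ∧ SpForest t EK4 ∧
        ∀ g : Finset (Sym2 (Fin 4)), Saturated g → SpForest (t ∩ g) g) ∧
    (¬ ∃ t : Finset (Sym2 (Fin 4)),
        (SimpleGraph.fromEdgeSet ((t : Set (Sym2 (Fin 4))))).IsTree ∧ SpForest t EK4 ∧
        ∀ S : Finset (Fin 4), S.card = 3 → (t ∩ triEdges S).card = 2) := by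
  refine ⟨?_, not_exists_isTree_card_inter_triEdges_eq_two⟩
  rintro ⟨t, htree, hspan, hadapted⟩
  exact not_exists_isTree_card_inter_triEdges_eq_two
    ⟨t, htree, hspan, fun S hS => (hadapted _ (saturated_triEdges S)).card_eq_two_of_triEdges hS⟩

end Stmt7
end

section
/- For the complete graph K₄ with vertex set of size 4, the irreducible elements of the saturated graph lattice G(K₄) comprising saturated subgraphs are exactly: the six single edges, the four triangle subgraphs (embeddings of K₃), and K₄ itself; while the three perfect matchings (disjoint unions of two opposite edges, a∪̇c, b∪̇d, e∪̇f) are reducible. -/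
attribute [local instance] Classical.propDecidable

namespace Stmt15

/-- The edge set of the complete graph `K₄`. -/
noncomputable def EK4 : Finset (Sym2 (Fin 4)) := (⊤ : SimpleGraph (Fin 4)).edgeFinset

/-- The vertex support of a subgraph of `K₄`. -/
noncomputable def vSet (g : Finset (Sym2 (Fin 4))) : Finset (Fin 4) :=
  Finset.univ.filter (fun v => ∃ e ∈ g, v ∈ e)

/-- A subgraph of `K₄` is saturated if it contains every edge of `K₄` whose endpoints
are already connected in it (equivalently, it is a disjoint union of complete graphs
on its vertex set). -/
def Saturated (g : Finset (Sym2 (Fin 4))) : Prop :=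
  g ⊆ EK4 ∧ ∀ v w : Fin 4, v ≠ w →
    (SimpleGraph.fromEdgeSet ((g : Set (Sym2 (Fin 4))))).Reachable v w → s(v, w) ∈ g

/-- `g` is reducible: it decomposes as a union of two nonempty vertex-disjoint parts
(so that the associated subspace decomposes as a direct sum, `dim A` being additive). -/
noncomputable def Reducible (g : Finset (Sym2 (Fin 4))) : Prop :=
  ∃ g₁ g₂ : Finset (Sym2 (Fin 4)),
    g₁.Nonempty ∧ g₂.Nonempty ∧ g₁ ∪ g₂ = g ∧ Disjoint (vSet g₁) (vSet g₂)

/-- The edges of `K₄` inside a vertex set `S`; for `|S| = 3` this is a triangle `K₃`. -/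
noncomputable def triEdges (S : Finset (Fin 4)) : Finset (Sym2 (Fin 4)) :=
  EK4.filter (fun e => ∀ v ∈ e, v ∈ S)

/-! ### Auxiliary decidable versions -/

def E : Finset (Sym2 (Fin 4)) := {s(0,1), s(0,2), s(0,3), s(1,2), s(1,3), s(2,3)}

lemma EK4_eq : EK4 = E := by
  ext e
  induction e using Sym2.inductionOn with
  | hf a b =>
    simp only [EK4, SimpleGraph.mem_edgeFinset, SimpleGraph.edgeSet_top, Set.mem_setOf_eq,
      Sym2.isDiag_iff_proj_eq]
    revert a b; decide

def mk (b₁ b₂ b₃ b₄ b₅ b₆ : Bool) : Finset (Sym2 (Fin 4)) :=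
  (if b₁ then {s(0,1)} else ∅) ∪ (if b₂ then {s(0,2)} else ∅) ∪
  (if b₃ then {s(0,3)} else ∅) ∪ (if b₄ then {s(1,2)} else ∅) ∪
  (if b₅ then {s(1,3)} else ∅) ∪ (if b₆ then {s(2,3)} else ∅)

def vS (g : Finset (Sym2 (Fin 4))) : Finset (Fin 4) :=
  Finset.univ.filter (fun v => ∃ e ∈ g, v ∈ e)

lemma vSet_eq : vSet = vS := by
  funext g; ext v; simp [vSet, vS]

def Red (g : Finset (Sym2 (Fin 4))) : Prop :=
  ∃ c₁ c₂ c₃ c₄ c₅ c₆ : Bool, (mk c₁ c₂ c₃ c₄ c₅ c₆) ⊆ g ∧ (mk c₁ c₂ c₃ c₄ c₅ c₆) ≠ ∅ ∧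
    g \ (mk c₁ c₂ c₃ c₄ c₅ c₆) ≠ ∅ ∧
    Disjoint (vS (mk c₁ c₂ c₃ c₄ c₅ c₆)) (vS (g \ (mk c₁ c₂ c₃ c₄ c₅ c₆)))

def SatD (g : Finset (Sym2 (Fin 4))) : Prop :=
  ∀ a b c : Fin 4, a ≠ b → b ≠ c → a ≠ c → s(a,b) ∈ g → s(b,c) ∈ g → s(a,c) ∈ g

def triE (S : Finset (Fin 4)) : Finset (Sym2 (Fin 4)) :=
  E.filter (fun e => ∀ v ∈ e, v ∈ S)

lemma triEdges_eq : triEdges = triE := by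
  funext S; ext e; simp [triEdges, triE, EK4_eq]

def RHS (g : Finset (Sym2 (Fin 4))) : Prop :=
  g.card = 1 ∨ (∃ S : Finset (Fin 4), S.card = 3 ∧ g = triE S) ∨ g = E

instance : DecidablePred Red := fun g => by unfold Red; infer_instance
instance : DecidablePred SatD := fun g => by unfold SatD; infer_instance
instance : DecidablePred RHS := fun g => by unfold RHS; infer_instance

set_option maxRecDepth 100000 in
set_option maxHeartbeats 4000000 in
lemma core : ∀ b₁ b₂ b₃ b₄ b₅ b₆ : Bool, SatD (mk b₁ b₂ b₃ b₄ b₅ b₆) →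
    mk b₁ b₂ b₃ b₄ b₅ b₆ ≠ ∅ →
    (¬ Red (mk b₁ b₂ b₃ b₄ b₅ b₆) ↔ RHS (mk b₁ b₂ b₃ b₄ b₅ b₆)) := by
  decide

lemma mem_mk (b₁ b₂ b₃ b₄ b₅ b₆ : Bool) (e : Sym2 (Fin 4)) :
    e ∈ mk b₁ b₂ b₃ b₄ b₅ b₆ ↔
      ((b₁ ∧ e = s(0,1)) ∨ (b₂ ∧ e = s(0,2)) ∨ (b₃ ∧ e = s(0,3)) ∨
       (b₄ ∧ e = s(1,2)) ∨ (b₅ ∧ e = s(1,3)) ∨ (b₆ ∧ e = s(2,3))) := by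
  cases b₁ <;> cases b₂ <;> cases b₃ <;> cases b₄ <;> cases b₅ <;> cases b₆ <;>
    simp [mk, or_assoc]

lemma exists_mk {g : Finset (Sym2 (Fin 4))} (hg : g ⊆ E) :
    ∃ b₁ b₂ b₃ b₄ b₅ b₆ : Bool, g = mk b₁ b₂ b₃ b₄ b₅ b₆ := by
  refine ⟨decide (s(0,1) ∈ g), decide (s(0,2) ∈ g), decide (s(0,3) ∈ g),
    decide (s(1,2) ∈ g), decide (s(1,3) ∈ g), decide (s(2,3) ∈ g), ?_⟩
  ext e
  rw [mem_mk]
  simp only [decide_eq_true_eq]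
  constructor
  · intro h
    have he : e ∈ E := hg h
    simp only [E, Finset.mem_insert, Finset.mem_singleton] at he
    rcases he with rfl | rfl | rfl | rfl | rfl | rfl <;> tauto
  · rintro (⟨h, rfl⟩ | ⟨h, rfl⟩ | ⟨h, rfl⟩ | ⟨h, rfl⟩ | ⟨h, rfl⟩ | ⟨h, rfl⟩) <;> exact h

lemma edge_has_vertex (e : Sym2 (Fin 4)) : ∃ v, v ∈ e := by
  induction e using Sym2.inductionOn with
  | hf a b => exact ⟨a, Sym2.mem_mk_left a b⟩

lemma reducible_iff_red {g : Finset (Sym2 (Fin 4))} (hg : g ⊆ E) :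
    Reducible g ↔ Red g := by
  constructor
  · rintro ⟨g₁, g₂, h₁, h₂, hu, hd⟩
    rw [vSet_eq] at hd
    have hsub₁ : g₁ ⊆ g := hu ▸ Finset.subset_union_left
    have hsub₂ : g₂ ⊆ g := hu ▸ Finset.subset_union_right
    have hdisj : ∀ e, e ∈ g₁ → e ∉ g₂ := by
      intro e he₁ he₂
      obtain ⟨v, hv⟩ := edge_has_vertex e
      have hv₁ : v ∈ vS g₁ := by simp [vS]; exact ⟨e, he₁, hv⟩
      have hv₂ : v ∈ vS g₂ := by simp [vS]; exact ⟨e, he₂, hv⟩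
      exact (Finset.disjoint_left.mp hd hv₁) hv₂
    have hg2 : g \ g₁ = g₂ := by
      ext e
      simp only [Finset.mem_sdiff]
      constructor
      · rintro ⟨heg, he₁⟩
        rcases Finset.mem_union.mp (hu ▸ heg) with h | h
        · exact absurd h he₁
        · exact h
      · intro he₂
        exact ⟨hsub₂ he₂, fun he₁ => hdisj e he₁ he₂⟩
    obtain ⟨b₁, b₂, b₃, b₄, b₅, b₆, rfl⟩ := exists_mk (hsub₁.trans hg)
    exact ⟨b₁, b₂, b₃, b₄, b₅, b₆, hsub₁, Finset.nonempty_iff_ne_empty.mp h₁,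
      hg2 ▸ Finset.nonempty_iff_ne_empty.mp h₂, hg2 ▸ hd⟩
  · rintro ⟨c₁, c₂, c₃, c₄, c₅, c₆, hsub, hne₁, hne₂, hd⟩
    refine ⟨mk c₁ c₂ c₃ c₄ c₅ c₆, g \ mk c₁ c₂ c₃ c₄ c₅ c₆,
      Finset.nonempty_iff_ne_empty.mpr hne₁, Finset.nonempty_iff_ne_empty.mpr hne₂,
      Finset.union_sdiff_of_subset hsub, ?_⟩
    rw [vSet_eq]; exact hd

lemma saturated_satD {g : Finset (Sym2 (Fin 4))} (hg : Saturated g) : SatD g := by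
  intro a b c hab hbc hac h1 h2
  apply hg.2 a c hac
  have hadj1 : (SimpleGraph.fromEdgeSet ((g : Set (Sym2 (Fin 4))))).Adj a b :=
    (SimpleGraph.fromEdgeSet_adj _).mpr ⟨h1, hab⟩
  have hadj2 : (SimpleGraph.fromEdgeSet ((g : Set (Sym2 (Fin 4))))).Adj b c :=
    (SimpleGraph.fromEdgeSet_adj _).mpr ⟨h2, hbc⟩
  exact hadj1.reachable.trans hadj2.reachable

/-- The irreducible elements of the saturated graph lattice `G(K₄)`
are exactly: the six single edges, the four triangle subgraphs (embeddings of `K₃`),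
and `K₄` itself; while the three perfect matchings (disjoint unions of two opposite
edges) are reducible. -/
theorem K4_irreducibles :
    (∀ g : Finset (Sym2 (Fin 4)), Saturated g → g.Nonempty →
      (¬ Reducible g ↔
        (g.card = 1 ∨
         (∃ S : Finset (Fin 4), S.card = 3 ∧ g = triEdges S) ∨
         g = EK4))) ∧
    (∀ e₁ e₂ : Sym2 (Fin 4), e₁ ∈ EK4 → e₂ ∈ EK4 →
      (∀ v : Fin 4, v ∈ e₁ → v ∉ e₂) → Reducible {e₁, e₂}) := by
  constructor
  · intro g hsat hne
    have hsub : g ⊆ E := EK4_eq ▸ hsat.1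
    have hsatD : SatD g := saturated_satD hsat
    obtain ⟨b₁, b₂, b₃, b₄, b₅, b₆, rfl⟩ := exists_mk hsub
    rw [(reducible_iff_red hsub).not,
      core b₁ b₂ b₃ b₄ b₅ b₆ hsatD (Finset.nonempty_iff_ne_empty.mp hne),
      RHS, triEdges_eq, EK4_eq]
  · intro e₁ e₂ h₁ h₂ hdis
    refine ⟨{e₁}, {e₂}, Finset.singleton_nonempty e₁, Finset.singleton_nonempty e₂,
      (Finset.insert_eq e₁ {e₂}).symm, ?_⟩
    rw [Finset.disjoint_left]
    intro v hv₁ hv₂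
    simp only [vSet, Finset.mem_filter, Finset.mem_singleton] at hv₁ hv₂
    obtain ⟨-, e, rfl, hv₁⟩ := hv₁
    obtain ⟨-, e', rfl, hv₂⟩ := hv₂
    exact hdis v hv₁ hv₂
end Stmt15
end
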